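/- Hamiltonian of a SympFlow pair layer: Let V_q, V_p : ℝ × ℝ^d → ℝ be twice continuously differentiable, and define φ_{q,t}(q,p) = (q, p − (∇_q V_q(t,q) − ∇_q V_q(0,q))) and φ_{p,t}(q,p) = (q + (∇_p V_p(t,p) − ∇_p V_p(0,p)), p). Then the composition ψ_t = φ_{p,t} ∘ φ_{q,t} satisfies ψ_0 = id and ∂_t ψ_t(x) = J ∇_x H(t, ψ_t(x)) for all t ∈ ℝ and x ∈ ℝ^{2d}, where H(t,(q,p)) = ∂_t V_p(t,p) + ∂_t V_q(t, q − (∇_p V_p(t,p) − ∇_p V_p(0,p))). -/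

import Mathlib

noncomputable section

/-- Phase-space factor `ℝ^d`. -/
abbrev Vec (d : ℕ) := EuclideanSpace ℝ (Fin d)

/-- Phase space `ℝ^{2d}` split as positions and momenta. -/
abbrev Phase (d : ℕ) := Vec d × Vec d

/-- Gradient with respect to the position variable. -/
def gradQ {d : ℕ} (H : Phase d → ℝ) (x : Phase d) : Vec d :=
  gradient (fun q => H (q, x.2)) x.1

/-- Gradient with respect to the momentum variable. -/
def gradP {d : ℕ} (H : Phase d → ℝ) (x : Phase d) : Vec d :=
  gradient (fun p => H (x.1, p)) x.2

/-- `J ∇H (q,p) = (∇ₚH(q,p), −∇_qH(q,p))`. -/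
def JgradH {d : ℕ} (H : Phase d → ℝ) (x : Phase d) : Phase d :=
  (gradP H x, - gradQ H x)

/-- Position layer `φ_{q,t}(q,p) = (q, p − (∇_q V(t,q) − ∇_q V(0,q)))`. -/
def layerQ {d : ℕ} (V : ℝ → Vec d → ℝ) (t : ℝ) (x : Phase d) : Phase d :=
  (x.1, x.2 - (gradient (V t) x.1 - gradient (V 0) x.1))

/-- Momentum layer `φ_{p,t}(q,p) = (q + (∇_p V(t,p) − ∇_p V(0,p)), p)`. -/
def layerP {d : ℕ} (V : ℝ → Vec d → ℝ) (t : ℝ) (x : Phase d) : Phase d :=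
  (x.1 + (gradient (V t) x.2 - gradient (V 0) x.2), x.2)

/-!
After `φ_{q,s}` the momentum is `P s = p - (∇V_q(s,q) - ∇V_q(0,q))`, with velocity
`-∂ₜ∇V_q(t,q)`, and `ψ_s(q,p) = (q + ∇V_p(s,P s) - ∇V_p(0,P s), P s)`, so the chain rule gives
`∂ₜψ`. On the other side, `∇_q H = ∂ₜ∇V_q(t,q)`, and by the chain rule `∇_p H` is `∂ₜ∇V_p` minus
the transpose of `∇²V_p(t,p) - ∇²V_p(0,p)` applied to `∂ₜ∇V_q`. Both sides match because the second
derivative of the `C²` map `(t, x) ↦ V(t, x)` is symmetric: the spatial gradient of `∂ₜV` is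
`∂ₜ∇V`, and the spatial Hessian is self-adjoint.
-/

open ContinuousLinearMap Function
open scoped Gradient RealInnerProductSpace

section Gradient

variable {E F : Type*} [NormedAddCommGroup E] [InnerProductSpace ℝ E] [CompleteSpace E]
  [NormedAddCommGroup F] [InnerProductSpace ℝ F] [CompleteSpace F]

theorem HasGradientAt.add {f g : E → ℝ} {f' g' x : E} (hf : HasGradientAt f f' x)
    (hg : HasGradientAt g g' x) : HasGradientAt (fun y => f y + g y) (f' + g') x := by
  rw [hasGradientAt_iff_hasFDerivAt, map_add]
  exact hf.hasFDerivAt.add hg.hasFDerivAt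

theorem HasGradientAt.comp_hasFDerivAt {f : F → ℝ} {g : F} {h : E → F} {L : E →L[ℝ] F}
    {x : E} (hf : HasGradientAt f g (h x)) (hh : HasFDerivAt h L x) :
    HasGradientAt (f ∘ h) (adjoint L g) x := by
  rw [hasGradientAt_iff_hasFDerivAt]
  refine (hf.hasFDerivAt.comp x hh).congr_fderiv ?_
  ext v
  simp [adjoint_inner_left]

/-- The gradient of `v ↦ l (0, v)`. -/
def sndGradient : ((ℝ × E) →L[ℝ] ℝ) →L[ℝ] E :=
  ((InnerProductSpace.toDual ℝ E).symm : StrongDual ℝ E →SL[starRingEnd ℝ] E) ∘L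
    (compL ℝ E (ℝ × E) ℝ).flip (inr ℝ ℝ E)

theorem toDual_sndGradient (l : (ℝ × E) →L[ℝ] ℝ) :
    InnerProductSpace.toDual ℝ E (sndGradient l) = l ∘L inr ℝ ℝ E := by
  simp [sndGradient]

theorem inner_sndGradient (l : (ℝ × E) →L[ℝ] ℝ) (v : E) : ⟪sndGradient l, v⟫ = l (0, v) := by
  simp [sndGradient]

end Gradient

section Potential

variable {E : Type*} [NormedAddCommGroup E] [InnerProductSpace ℝ E] {V : ℝ → E → ℝ}

theorem DifferentiableAt.hasDerivAt_uncurry_left {s : ℝ} {w : E}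
    (hV : DifferentiableAt ℝ (uncurry V) (s, w)) :
    HasDerivAt (fun r => V r w) (fderiv ℝ (uncurry V) (s, w) (1, 0)) s := by
  simpa [Function.comp_def] using
    hV.hasFDerivAt.comp_hasDerivAt s ((hasDerivAt_id s).prodMk (hasDerivAt_const s w))

variable [CompleteSpace E]

theorem DifferentiableAt.hasGradientAt_uncurry_right {s : ℝ} {w : E}
    (hV : DifferentiableAt ℝ (uncurry V) (s, w)) :
    HasGradientAt (V s) (sndGradient (fderiv ℝ (uncurry V) (s, w))) w := by
  rw [hasGradientAt_iff_hasFDerivAt, toDual_sndGradient]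
  exact hV.hasFDerivAt.comp w (hasFDerivAt_prodMk_right s w)

variable (V) in
def timeGradient (z : ℝ × E) : E :=
  sndGradient (fderiv ℝ (fderiv ℝ (uncurry V)) z (1, 0))

variable (V) in
def spaceHessian (z : ℝ × E) : E →L[ℝ] E :=
  sndGradient ∘L fderiv ℝ (fderiv ℝ (uncurry V)) z ∘L inr ℝ ℝ E

theorem ContDiff.hasFDerivAt_gradient_uncurry (hV : ContDiff ℝ 2 (uncurry V)) (z : ℝ × E) :
    HasFDerivAt (fun z : ℝ × E => ∇ (V z.1) z.2)
      (sndGradient ∘L fderiv ℝ (fderiv ℝ (uncurry V)) z) z := by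
  have hgrad : (fun z : ℝ × E => ∇ (V z.1) z.2) = sndGradient ∘ fderiv ℝ (uncurry V) :=
    funext fun z => (hV.differentiable two_ne_zero z).hasGradientAt_uncurry_right.gradient
  rw [hgrad]
  exact sndGradient.hasFDerivAt.comp z
    ((hV.fderiv_right (m := 1) le_rfl).differentiable one_ne_zero z).hasFDerivAt

theorem ContDiff.hasFDerivAt_gradient_uncurry_right (hV : ContDiff ℝ 2 (uncurry V)) (s : ℝ)
    (w : E) : HasFDerivAt (∇ (V s)) (spaceHessian V (s, w)) w :=
  (hV.hasFDerivAt_gradient_uncurry (s, w)).comp w (hasFDerivAt_prodMk_right s w)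

theorem HasDerivAt.gradient_uncurry (hV : ContDiff ℝ 2 (uncurry V)) {a : ℝ → ℝ} {c : ℝ → E}
    {α t : ℝ} {γ : E} (ha : HasDerivAt a α t) (hc : HasDerivAt c γ t) :
    HasDerivAt (fun s => ∇ (V (a s)) (c s))
      (α • timeGradient V (a t, c t) + spaceHessian V (a t, c t) γ) t := by
  refine ((hV.hasFDerivAt_gradient_uncurry (a t, c t)).comp_hasDerivAt t
    (ha.prodMk hc)).congr_deriv ?_
  have hsplit : ((α, γ) : ℝ × E) = α • ((1 : ℝ), (0 : E)) + ((0 : ℝ), γ) := by simp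
  simp only [timeGradient, spaceHessian, coe_comp, Function.comp_apply, inr_apply, hsplit,
    map_add, map_smul]

theorem ContDiff.hasGradientAt_deriv_uncurry (hV : ContDiff ℝ 2 (uncurry V)) (s : ℝ) (w : E) :
    HasGradientAt (fun w => deriv (fun r => V r w) s) (timeGradient V (s, w)) w := by
  have hderiv : (fun w => deriv (fun r => V r w) s) =
      fun w => fderiv ℝ (uncurry V) (s, w) (1, 0) :=
    funext fun w => (hV.differentiable two_ne_zero (s, w)).hasDerivAt_uncurry_left.deriv
  rw [hderiv, hasGradientAt_iff_hasFDerivAt, timeGradient, toDual_sndGradient]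
  refine ((apply ℝ ℝ ((1 : ℝ), (0 : E))).hasFDerivAt.comp w
    (((hV.fderiv_right (m := 1) le_rfl).differentiable one_ne_zero (s, w)).hasFDerivAt.comp w
      (hasFDerivAt_prodMk_right s w))).congr_fderiv ?_
  ext v
  exact hV.contDiffAt.isSymmSndFDerivAt (by simp) _ _

theorem ContDiff.isSelfAdjoint_spaceHessian (hV : ContDiff ℝ 2 (uncurry V)) (z : ℝ × E) :
    IsSelfAdjoint (spaceHessian V z) := by
  refine LinearMap.IsSymmetric.isSelfAdjoint fun u v => ?_
  simp only [spaceHessian, coe_coe, coe_comp, Function.comp_apply, inr_apply]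
  rw [real_inner_comm _ u, inner_sndGradient, inner_sndGradient]
  exact hV.contDiffAt.isSymmSndFDerivAt (by simp) _ _

end Potential

section PairLayer

variable {d : ℕ} {Vq Vp : ℝ → Vec d → ℝ}

theorem layerQ_zero (V : ℝ → Vec d → ℝ) (x : Phase d) : layerQ V 0 x = x := by
  simp [layerQ]

theorem layerP_zero (V : ℝ → Vec d → ℝ) (x : Phase d) : layerP V 0 x = x := by
  simp [layerP]

variable (Vq Vp) in
def pairHamiltonian (t : ℝ) (y : Phase d) : ℝ :=
  deriv (fun s => Vp s y.2) t + deriv (fun s => Vq s (y.1 - (∇ (Vp t) y.2 - ∇ (Vp 0) y.2))) t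

theorem gradQ_pairHamiltonian (hVq : ContDiff ℝ 2 (uncurry Vq)) (t : ℝ) (y : Phase d) :
    gradQ (pairHamiltonian Vq Vp t) y =
      timeGradient Vq (t, y.1 - (∇ (Vp t) y.2 - ∇ (Vp 0) y.2)) := by
  set Δ := ∇ (Vp t) y.2 - ∇ (Vp 0) y.2
  have hshift : HasFDerivAt (fun q : Vec d => q - Δ) (ContinuousLinearMap.id ℝ (Vec d)) y.1 :=
    (hasFDerivAt_id _).sub_const Δ
  have hgrad := (hasGradientAt_const y.1 (deriv (fun s => Vp s y.2) t)).add
    ((hVq.hasGradientAt_deriv_uncurry t (y.1 - Δ)).comp_hasFDerivAt (h := fun q => q - Δ) hshift)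
  rw [adjoint_id, id_apply, zero_add] at hgrad
  exact hgrad.gradient

theorem gradP_pairHamiltonian (hVq : ContDiff ℝ 2 (uncurry Vq)) (hVp : ContDiff ℝ 2 (uncurry Vp))
    (t : ℝ) (y : Phase d) :
    gradP (pairHamiltonian Vq Vp t) y =
      timeGradient Vp (t, y.2) - (spaceHessian Vp (t, y.2) - spaceHessian Vp (0, y.2))
        (timeGradient Vq (t, y.1 - (∇ (Vp t) y.2 - ∇ (Vp 0) y.2))) := by
  set L := spaceHessian Vp (t, y.2) - spaceHessian Vp (0, y.2)
  have hL : adjoint (-L) = -L := ContinuousLinearMap.isSelfAdjoint_iff'.mp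
    ((hVp.isSelfAdjoint_spaceHessian _).sub (hVp.isSelfAdjoint_spaceHessian _)).neg
  have hshift : HasFDerivAt (fun p => y.1 - (∇ (Vp t) p - ∇ (Vp 0) p)) (-L) y.2 :=
    ((hVp.hasFDerivAt_gradient_uncurry_right t y.2).sub
      (hVp.hasFDerivAt_gradient_uncurry_right 0 y.2)).const_sub y.1
  have hgrad := (hVp.hasGradientAt_deriv_uncurry t y.2).add
    ((hVq.hasGradientAt_deriv_uncurry t _).comp_hasFDerivAt hshift)
  rw [hL, neg_apply, ← sub_eq_add_neg] at hgrad
  exact hgrad.gradient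

theorem hasDerivAt_layerP_layerQ (hVq : ContDiff ℝ 2 (uncurry Vq))
    (hVp : ContDiff ℝ 2 (uncurry Vp)) (t : ℝ) (x : Phase d) :
    HasDerivAt (fun s => layerP Vp s (layerQ Vq s x))
      (timeGradient Vp (t, (layerQ Vq t x).2) -
          (spaceHessian Vp (t, (layerQ Vq t x).2) - spaceHessian Vp (0, (layerQ Vq t x).2))
            (timeGradient Vq (t, x.1)),
        -timeGradient Vq (t, x.1)) t := by
  have hp : HasDerivAt (fun s => (layerQ Vq s x).2) (-timeGradient Vq (t, x.1)) t := by
    have h := (((hasDerivAt_id t).gradient_uncurry hVq (hasDerivAt_const t x.1)).sub_const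
      (∇ (Vq 0) x.1)).const_sub x.2
    simp only [one_smul, map_zero, add_zero] at h
    exact h
  have hq := (((hasDerivAt_id t).gradient_uncurry hVp hp).sub
    ((hasDerivAt_const t 0).gradient_uncurry hVp hp)).const_add x.1
  refine (hq.prodMk hp).congr_deriv ?_
  simp only [id, one_smul, zero_smul, zero_add, map_neg, sub_apply]
  congr 1
  abel

end PairLayer

theorem pair_layer_hamiltonian
    (d : ℕ) (Vq Vp : ℝ → Vec d → ℝ)
    (hVq : ContDiff ℝ 2 (fun z : ℝ × Vec d => Vq z.1 z.2))
    (hVp : ContDiff ℝ 2 (fun z : ℝ × Vec d => Vp z.1 z.2)) :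
    (∀ x : Phase d, layerP Vp 0 (layerQ Vq 0 x) = x) ∧
    (∀ (t : ℝ) (x : Phase d),
      HasDerivAt (fun s => layerP Vp s (layerQ Vq s x))
        (JgradH
          (fun y : Phase d =>
            deriv (fun s => Vp s y.2) t +
            deriv (fun s => Vq s (y.1 - (gradient (Vp t) y.2 - gradient (Vp 0) y.2))) t)
          (layerP Vp t (layerQ Vq t x))) t) := by
  refine ⟨fun x => by rw [layerQ_zero, layerP_zero], fun t x => ?_⟩
  change HasDerivAt _ (JgradH (pairHamiltonian Vq Vp t) _) t
  set y := layerP Vp t (layerQ Vq t x)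
  have hq : y.1 - (∇ (Vp t) y.2 - ∇ (Vp 0) y.2) = x.1 := by simp [y, layerP, layerQ]
  rw [JgradH, gradP_pairHamiltonian hVq hVp, gradQ_pairHamiltonian hVq, hq]
  exact hasDerivAt_layerP_layerQ hVq hVp t x
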